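/- Empty-epg case is sound for pruning: if epg((P, ν), C, G) = ∅, then for every valid extension pair (G, G') ⊨ C, the evaluation of (P, ν) over G' is empty; i.e., the partially mapped BGP contributes no answers over any valid extension. -/
import Mathlib


/-- Constants (IRIs/literals) -/
abbrev Const := ℕ
/-- Variables -/
abbrev Var := ℕ

/-- A term is a constant or a variable. -/
inductive Term where
  | c : Const → Term
  | v : Var → Term
deriving DecidableEq

/-- Triple pattern -/
abbrev TP := Term × Term × Term
/-- Basic graph pattern (also used for graphs, as sets of ground triple patterns) -/
abbrev BGP := Set TP
/-- (Partial) mapping from variables to constants -/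
abbrev Mapping := Var → Option Const

def termVars : Term → Set Var
  | .c _ => ∅
  | .v x => {x}

def tpVars (t : TP) : Set Var := termVars t.1 ∪ termVars t.2.1 ∪ termVars t.2.2

def bgpVars (P : BGP) : Set Var := ⋃ t ∈ P, tpVars t

def termConsts : Term → Set Const
  | .c a => {a}
  | .v _ => ∅

def tpConsts (t : TP) : Set Const := termConsts t.1 ∪ termConsts t.2.1 ∪ termConsts t.2.2

def bgpConsts (P : BGP) : Set Const := ⋃ t ∈ P, tpConsts t

/-- A graph is a BGP all of whose triples are ground. -/
def GroundBGP (P : BGP) : Prop := ∀ t ∈ P, tpVars t = ∅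

def applyTerm (μ : Mapping) : Term → Term
  | .c a => .c a
  | .v x =>
    match μ x with
    | some a => .c a
    | none => .v x

def applyTP (μ : Mapping) (t : TP) : TP :=
  (applyTerm μ t.1, applyTerm μ t.2.1, applyTerm μ t.2.2)

def applyBGP (μ : Mapping) (P : BGP) : BGP := applyTP μ '' P

/-- Domain of a mapping -/
def mdom (μ : Mapping) : Set Var := {x | μ x ≠ none}

/-- Evaluation of a BGP over a graph: ⟦P⟧_G = {μ | dom(μ) = var(P), μP ⊆ G}. -/
def bgpEval (P G : BGP) : Set Mapping := {μ | mdom μ = bgpVars P ∧ applyBGP μ P ⊆ G}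

/-- A completeness statement Compl(P_C). -/
structure CS where
  pat : BGP

/-- The CONSTRUCT query associated to a completeness statement. -/
def constructQ (C : CS) (G : BGP) : BGP := ⋃ μ ∈ bgpEval C.pat G, applyBGP μ C.pat

/-- Transfer operator T_𝒞. -/
def transfer (𝒞 : Set CS) (G : BGP) : BGP := ⋃ C ∈ 𝒞, constructQ C G

/-- (G, G') is a valid extension pair wrt 𝒞. -/
def Valid (𝒞 : Set CS) (G G' : BGP) : Prop :=
  G ⊆ G' ∧ GroundBGP G' ∧ transfer 𝒞 G' ⊆ G

/-- 𝒞, G ⊨ Compl(P). -/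
def Entails (𝒞 : Set CS) (G : BGP) (P : BGP) : Prop :=
  ∀ G', Valid 𝒞 G G' → bgpEval P G' = bgpEval P G

def emptyMap : Mapping := fun _ => none

/-- Union of two mappings (left-biased; used on mappings with disjoint domains). -/
def munion (μ ν : Mapping) : Mapping := fun x => (μ x).orElse (fun _ => ν x)

/-- Partially mapped BGP -/
abbrev PMBGP := BGP × Mapping

/-- Evaluation of a partially mapped BGP: ⟦(P, ν)⟧_G = {ν ∪ ρ | ρ ∈ ⟦P⟧_G}. -/
def evalPM (pm : PMBGP) (G : BGP) : Set Mapping :=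
  {σ | ∃ ρ ∈ bgpEval pm.1 G, σ = munion pm.2 ρ}

def evalPMSet (S : Set PMBGP) (G : BGP) : Set Mapping := ⋃ pm ∈ S, evalPM pm G

/-- S ≡_{𝒞,G} S' : equal evaluations over every valid extension pair. -/
def EquivCG (𝒞 : Set CS) (G : BGP) (S S' : Set PMBGP) : Prop :=
  ∀ G', Valid 𝒞 G G' → evalPMSet S G' = evalPMSet S' G'

/-- The freeze mapping, sending each variable to a (fresh) constant. -/
def freezeMap (frz : Var → Const) : Mapping := fun x => some (frz x)

/-- frz is a genuine freeze mapping: injective and its values are fresh. -/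
def Fresh (frz : Var → Const) (𝒞 : Set CS) (G P : BGP) : Prop :=
  Function.Injective frz ∧
    ∀ x, frz x ∉ bgpConsts G ∪ bgpConsts P ∪ ⋃ C ∈ 𝒞, bgpConsts C.pat

/-- Crucial part: cruc(P, 𝒞, G) = P ∩ id̃⁻¹(T_𝒞(P̃ ∪ G)). -/
def cruc (P : BGP) (𝒞 : Set CS) (G : BGP) (frz : Var → Const) : BGP :=
  {t | t ∈ P ∧ applyTP (freezeMap frz) t ∈ transfer 𝒞 (applyBGP (freezeMap frz) P ∪ G)}

/-- Equivalent partial grounding operator. -/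
def epg (pm : PMBGP) (𝒞 : Set CS) (G : BGP) (frz : Var → Const) : Set PMBGP :=
  {q | ∃ μ ∈ bgpEval (cruc pm.1 𝒞 G frz) G, q = (applyBGP μ pm.1, munion pm.2 μ)}

/-- A partially mapped BGP is saturated wrt 𝒞 and G. -/
def Saturated (pm : PMBGP) (𝒞 : Set CS) (G : BGP) (frz : Var → Const) : Prop :=
  epg pm 𝒞 G frz = {pm}

/-- Partially mapped BGPs reachable from (P, ∅) by the saturation algorithm's epg steps. -/
inductive Reach (𝒞 : Set CS) (G : BGP) (frz : Var → Const) (P : BGP) : PMBGP → Prop where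
  | init : Reach 𝒞 G frz P (P, emptyMap)
  | step {pm pm' : PMBGP} : Reach 𝒞 G frz P pm → epg pm 𝒞 G frz ≠ {pm} →
      pm' ∈ epg pm 𝒞 G frz → Reach 𝒞 G frz P pm'

/-- The set Ω of mappings returned by the saturation algorithm sat(P, 𝒞, G). -/
def satSet (𝒞 : Set CS) (G : BGP) (frz : Var → Const) (P : BGP) : Set Mapping :=
  {ν | ∃ P', Reach 𝒞 G frz P (P', ν) ∧ Saturated (P', ν) 𝒞 G frz}

open Classical in
/-- The "unfreeze" map: sends `frz x` to the value of `ρ x`, identity elsewhere. -/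
noncomputable def gmap (frz : Var → Const) (ρ : Mapping) (a : Const) : Const :=
  if h : ∃ x, frz x = a then (ρ h.choose).getD a else a

def gTerm (g : Const → Const) : Term → Term
  | .c a => .c (g a)
  | .v x => .v x

def gTP (g : Const → Const) (t : TP) : TP := (gTerm g t.1, gTerm g t.2.1, gTerm g t.2.2)

lemma gmap_fix (frz : Var → Const) (ρ : Mapping) {a : Const} (h : ∀ x, frz x ≠ a) :
    gmap frz ρ a = a := by
  unfold gmap
  rw [dif_neg]
  rintro ⟨x, hx⟩
  exact h x hx

lemma gmap_frz {frz : Var → Const} (hinj : Function.Injective frz) (ρ : Mapping)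
    {x : Var} {c : Const} (h : ρ x = some c) : gmap frz ρ (frz x) = c := by
  unfold gmap
  have h0 : ∃ y, frz y = frz x := ⟨x, rfl⟩
  rw [dif_pos h0]
  have := h0.choose_spec
  rw [hinj this, h]
  rfl

lemma gTerm_applyTerm (g : Const → Const) (θ : Mapping) (s : Term)
    (hc : ∀ a ∈ termConsts s, g a = a) :
    gTerm g (applyTerm θ s) = applyTerm (fun y => (θ y).map g) s := by
  cases s with
  | c a => simp [applyTerm, gTerm, hc a (by simp [termConsts])]
  | v x => cases hθ : θ x <;> simp [applyTerm, gTerm, hθ]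

lemma gTP_applyTP (g : Const → Const) (θ : Mapping) (u : TP)
    (hc : ∀ a ∈ tpConsts u, g a = a) :
    gTP g (applyTP θ u) = applyTP (fun y => (θ y).map g) u := by
  obtain ⟨a, b, c⟩ := u
  have h1 : ∀ x ∈ termConsts a, g x = x := fun x hx => hc x (Or.inl (Or.inl hx))
  have h2 : ∀ x ∈ termConsts b, g x = x := fun x hx => hc x (Or.inl (Or.inr hx))
  have h3 : ∀ x ∈ termConsts c, g x = x := fun x hx => hc x (Or.inr hx)
  simp only [gTP, applyTP]
  exact Prod.ext (gTerm_applyTerm g θ a h1)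
    (Prod.ext (gTerm_applyTerm g θ b h2) (gTerm_applyTerm g θ c h3))

lemma gTerm_fix (g : Const → Const) (s : Term) (hc : ∀ a ∈ termConsts s, g a = a) :
    gTerm g s = s := by
  cases s with
  | c a => simp [gTerm, hc a (by simp [termConsts])]
  | v x => rfl

lemma gTP_fix (g : Const → Const) (t : TP) (hc : ∀ a ∈ tpConsts t, g a = a) :
    gTP g t = t := by
  obtain ⟨a, b, c⟩ := t
  exact Prod.ext (gTerm_fix g a fun x hx => hc x (Or.inl (Or.inl hx)))
    (Prod.ext (gTerm_fix g b fun x hx => hc x (Or.inl (Or.inr hx)))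
      (gTerm_fix g c fun x hx => hc x (Or.inr hx)))

lemma gTerm_freeze {frz : Var → Const} (hinj : Function.Injective frz) (ρ : Mapping)
    (s : Term) (hc : ∀ a ∈ termConsts s, ∀ x, frz x ≠ a)
    (hv : ∀ x ∈ termVars s, ρ x ≠ none) :
    gTerm (gmap frz ρ) (applyTerm (freezeMap frz) s) = applyTerm ρ s := by
  cases s with
  | c a =>
    simp only [applyTerm, gTerm]
    rw [gmap_fix frz ρ (hc a (by simp [termConsts]))]
  | v x =>
    have hx : ρ x ≠ none := hv x (by simp [termVars])
    obtain ⟨c, hcx⟩ := Option.ne_none_iff_exists'.mp hx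
    simp only [applyTerm, freezeMap, gTerm, hcx]
    rw [gmap_frz hinj ρ hcx]

lemma gTP_freeze {frz : Var → Const} (hinj : Function.Injective frz) (ρ : Mapping)
    (t : TP) (hc : ∀ a ∈ tpConsts t, ∀ x, frz x ≠ a)
    (hv : ∀ x ∈ tpVars t, ρ x ≠ none) :
    gTP (gmap frz ρ) (applyTP (freezeMap frz) t) = applyTP ρ t := by
  obtain ⟨a, b, c⟩ := t
  exact Prod.ext
    (gTerm_freeze hinj ρ a (fun x hx => hc x (Or.inl (Or.inl hx)))
      (fun x hx => hv x (Or.inl (Or.inl hx))))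
    (Prod.ext
      (gTerm_freeze hinj ρ b (fun x hx => hc x (Or.inl (Or.inr hx)))
        (fun x hx => hv x (Or.inl (Or.inr hx))))
      (gTerm_freeze hinj ρ c (fun x hx => hc x (Or.inr hx))
        (fun x hx => hv x (Or.inr hx))))

lemma applyTerm_congr (μ₁ μ₂ : Mapping) (s : Term)
    (h : ∀ x ∈ termVars s, μ₁ x = μ₂ x) : applyTerm μ₁ s = applyTerm μ₂ s := by
  cases s with
  | c a => rfl
  | v x => simp only [applyTerm, h x (by simp [termVars])]

lemma applyTP_congr (μ₁ μ₂ : Mapping) (t : TP)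
    (h : ∀ x ∈ tpVars t, μ₁ x = μ₂ x) : applyTP μ₁ t = applyTP μ₂ t := by
  obtain ⟨a, b, c⟩ := t
  exact Prod.ext (applyTerm_congr _ _ a fun x hx => h x (Or.inl (Or.inl hx)))
    (Prod.ext (applyTerm_congr _ _ b fun x hx => h x (Or.inl (Or.inr hx)))
      (applyTerm_congr _ _ c fun x hx => h x (Or.inr hx)))

lemma tpConsts_subset {P : BGP} {t : TP} (h : t ∈ P) : tpConsts t ⊆ bgpConsts P :=
  fun a ha => Set.mem_biUnion h ha

lemma tpVars_subset {P : BGP} {t : TP} (h : t ∈ P) : tpVars t ⊆ bgpVars P :=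
  fun x hx => Set.mem_biUnion h hx

/-- Empty-epg case is sound for pruning: if epg((P, ν), 𝒞, G) = ∅, then
(P, ν) evaluates to ∅ over every valid extension. -/
theorem stmt17 (𝒞 : Set CS) (G : BGP) (frz : Var → Const) (P : BGP) (ν : Mapping)
    (hg : GroundBGP G) (hfresh : Fresh frz 𝒞 G P)
    (hdisj : mdom ν ∩ bgpVars P = ∅)
    (hempty : epg (P, ν) 𝒞 G frz = ∅) :
    ∀ G', Valid 𝒞 G G' → evalPM (P, ν) G' = ∅ := by
  classical
  intro G' hval
  obtain ⟨hsub, hg', htrans⟩ := hval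
  obtain ⟨hinj, hfr⟩ := hfresh
  apply Set.eq_empty_iff_forall_notMem.mpr
  rintro σ ⟨ρ, ⟨hdom, hρsub⟩, rfl⟩
  set g := gmap frz ρ with hgdef
  set cr := cruc P 𝒞 G frz with hcrdef
  have hcrP : cr ⊆ P := fun t ht => ht.1
  have hρne : ∀ x ∈ bgpVars P, ρ x ≠ none := by
    intro x hx
    rw [← hdom] at hx
    exact hx
  -- g fixes non-fresh constants
  have hgfixP : ∀ a ∈ bgpConsts P, g a = a := by
    intro a ha
    exact gmap_fix frz ρ fun x hx => hfr x (hx ▸ Or.inl (Or.inr ha))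
  have hgfixG : ∀ a ∈ bgpConsts G, g a = a := by
    intro a ha
    exact gmap_fix frz ρ fun x hx => hfr x (hx ▸ Or.inl (Or.inl ha))
  -- key: every crucial triple maps into G under ρ
  have hkey : ∀ t ∈ cr, applyTP ρ t ∈ G := by
    rintro t ⟨htP, htT⟩
    -- unpack membership in the transfer over P̃ ∪ G
    rw [transfer, Set.mem_iUnion₂] at htT
    obtain ⟨C, hC, htC⟩ := htT
    rw [constructQ, Set.mem_iUnion₂] at htC
    obtain ⟨θ, hθ, htθ⟩ := htC
    obtain ⟨hθdom, hθsub⟩ := hθ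
    obtain ⟨u, hu, huθ⟩ := htθ
    set θ' : Mapping := fun y => (θ y).map g with hθ'def
    have hgfixC : ∀ a ∈ bgpConsts C.pat, g a = a := by
      intro a ha
      refine gmap_fix frz ρ fun x hx => hfr x (hx ▸ Or.inr ?_)
      exact Set.mem_biUnion hC ha
    -- θ' evaluates C.pat into G'
    have hθ'dom : mdom θ' = bgpVars C.pat := by
      rw [← hθdom]
      ext x
      simp [mdom, hθ'def]
    have hθ'sub : applyBGP θ' C.pat ⊆ G' := by
      rintro _ ⟨w, hw, rfl⟩
      have heq : applyTP θ' w = gTP g (applyTP θ w) :=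
        (gTP_applyTP g θ w fun a ha => hgfixC a (tpConsts_subset hw ha)).symm
      have hmem : applyTP θ w ∈ applyBGP (freezeMap frz) P ∪ G :=
        hθsub ⟨w, hw, rfl⟩
      rcases hmem with hmem | hmem
      · obtain ⟨s, hs, hse⟩ := hmem
        rw [heq, ← hse, gTP_freeze hinj ρ s
          (fun a ha x hx => hfr x (hx ▸ Or.inl (Or.inr (tpConsts_subset hs ha))))
          (fun x hx => hρne x (tpVars_subset hs hx))]
        exact hρsub ⟨s, hs, rfl⟩
      · rw [heq, gTP_fix g _ fun a ha => hgfixG a (tpConsts_subset hmem ha)]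
        exact hsub hmem
    -- ρ t is produced by θ'
    have hρt : applyTP ρ t = applyTP θ' u := by
      rw [(gTP_applyTP g θ u fun a ha => hgfixC a (tpConsts_subset hu ha)).symm.trans
        rfl, huθ]
      exact (gTP_freeze hinj ρ t
        (fun a ha x hx => hfr x (hx ▸ Or.inl (Or.inr (tpConsts_subset htP ha))))
        (fun x hx => hρne x (tpVars_subset htP hx))).symm
    apply htrans
    rw [transfer, Set.mem_iUnion₂]
    refine ⟨C, hC, ?_⟩
    rw [constructQ, Set.mem_iUnion₂]
    exact ⟨θ', ⟨hθ'dom, hθ'sub⟩, ⟨u, hu, hρt.symm⟩⟩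
  -- restrict ρ to the variables of cr
  set μ : Mapping := fun x => if x ∈ bgpVars cr then ρ x else none with hμdef
  have hcrvars : bgpVars cr ⊆ bgpVars P := by
    intro x hx
    rw [bgpVars, Set.mem_iUnion₂] at hx ⊢
    obtain ⟨t, ht, hxt⟩ := hx
    exact ⟨t, hcrP ht, hxt⟩
  have hμmem : μ ∈ bgpEval cr G := by
    constructor
    · ext x
      by_cases hx : x ∈ bgpVars cr
      · simp only [mdom, Set.mem_setOf_eq, hμdef, if_pos hx]
        exact iff_of_true (hρne x (hcrvars hx)) hx
      · simp only [mdom, Set.mem_setOf_eq, hμdef, if_neg hx]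
        exact iff_of_false (fun h => h rfl) hx
    · rintro _ ⟨t, ht, rfl⟩
      have : applyTP μ t = applyTP ρ t := by
        apply applyTP_congr
        intro x hx
        simp only [hμdef, if_pos (tpVars_subset ht hx)]
      rw [this]
      exact hkey t ht
  have : (applyBGP μ P, munion ν μ) ∈ epg (P, ν) 𝒞 G frz := ⟨μ, hμmem, rfl⟩
  rw [hempty] at this
  exact this
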